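/- arXiv:2004.13399 — 3 statements merged into one kernel-verified Lean document; each statement's English description precedes it below -/
import Mathlib

section
/- For integers $n \ge b \ge 0$ and $b - d - a \ge 0$ (with $a, d \ge 0$), we have $\sum_{i=0}^{n-b} C^{i+d}_{i} \binom{2n-2i-d-a}{n-b-i} = \binom{2n-a+1}{n-b}$. -/
/-- Ballot numbers `C^n_k = C(n+k, n) - C(n+k, n+1)`. -/
def ballot (n k : ℕ) : ℕ := (n + k).choose n - (n + k).choose (n + 1)


lemma ballot_zero (d : ℕ) : ballot d 0 = 1 := by
  simp [ballot]

lemma choose_anti (n k : ℕ) (h : k ≤ n + 1) : (n + k).choose (n + 1) ≤ (n + k).choose n := by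
  rcases Nat.eq_zero_or_pos k with rfl | hk
  · simp [Nat.choose_eq_zero_of_lt]
  have h1 : (n + k).choose (n + 1) = (n + k).choose (k - 1) := by
    rw [← Nat.choose_symm (by omega)]
    congr 1
    omega
  have h2 : (n + k).choose n = (n + k).choose k := by
    rw [← Nat.choose_symm (by omega)]
    congr 1
    omega
  rw [h1, h2]
  rcases Nat.lt_or_ge (k - 1) ((n + k) / 2) with hlt | hge
  · calc (n + k).choose (k - 1) ≤ (n + k).choose (k - 1 + 1) :=
        Nat.choose_le_succ_of_lt_half_left hlt
      _ = (n + k).choose k := by congr 1; omega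
  · have hk' : k = n + 1 := by omega
    subst hk'
    have e : n + (n + 1) = 2 * n + 1 := by ring
    have e2 : n + 1 - 1 = n := by omega
    rw [e, e2]
    have := Nat.choose_symm_half n
    omega

lemma ballot_succ_self (n : ℕ) : ballot n (n + 1) = 0 := by
  unfold ballot
  have e : n + (n + 1) = 2 * n + 1 := by ring
  rw [e]
  have := Nat.choose_symm_half n
  omega

lemma ballot_rec (n k : ℕ) (hk : 1 ≤ k) (hkn : k ≤ n) :
    ballot n k = ballot n (k - 1) + ballot (n - 1) k := by
  obtain ⟨n', rfl⟩ : ∃ n', n = n' + 1 := ⟨n - 1, by omega⟩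
  obtain ⟨k', rfl⟩ : ∃ k', k = k' + 1 := ⟨k - 1, by omega⟩
  unfold ballot
  have e1 : n' + 1 + (k' + 1) = (n' + k' + 1) + 1 := by ring
  have e2 : n' + 1 + k' = n' + k' + 1 := by ring
  have e3 : n' + 1 - 1 = n' := by omega
  have e4 : k' + 1 - 1 = k' := by omega
  have e5 : n' + (k' + 1) = n' + k' + 1 := by ring
  rw [e1, e3, e4, e2, e5]
  rw [Nat.choose_succ_succ (n' + k' + 1) n', Nat.choose_succ_succ (n' + k' + 1) (n' + 1)]
  simp only [Nat.succ_eq_add_one]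
  set M := n' + k' + 1 with hM
  have hCB : M.choose (n' + 1 + 1) ≤ M.choose (n' + 1) := by
    have h := choose_anti (n' + 1) k' (by omega)
    have e : n' + 1 + k' = M := by omega
    rwa [e] at h
  have hBA : M.choose (n' + 1) ≤ M.choose n' := by
    have h := choose_anti n' (k' + 1) (by omega)
    have e : n' + (k' + 1) = M := by omega
    rwa [e] at h
  omega

lemma ballot_one (n : ℕ) : ballot n 1 = n := by
  unfold ballot
  rw [Nat.choose_succ_self_right, Nat.choose_self]
  omega

lemma key : ∀ m d N : ℕ, 2 * m ≤ N + 1 →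
    ∑ i ∈ Finset.range (m + 1), ballot (i + d) i * (N - 2 * i).choose (m - i)
      = (N + d + 1).choose m := by
  intro m
  induction m with
  | zero => intro d N h; simp [ballot_zero]
  | succ m ih =>
    intro d N h
    match N, h with
    | 0, h => omega
    | 1, h =>
      have hm : m = 0 := by omega
      subst hm
      rw [Finset.sum_range_succ, Finset.sum_range_one]
      simp [ballot_zero, ballot_one]
      omega
    | (M + 2), h =>
      induction d with
      | zero =>
        rw [Finset.sum_range_succ']
        have hsum : ∑ i ∈ Finset.range (m + 1),
            ballot (i + 1 + 0) (i + 1) * (M + 2 - 2 * (i + 1)).choose (m + 1 - (i + 1))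
            = ∑ i ∈ Finset.range (m + 1), ballot (i + 1) i * (M - 2 * i).choose (m - i) := by
          apply Finset.sum_congr rfl
          intro i _
          have h1 := ballot_rec (i + 1) (i + 1) (by omega) (by omega)
          simp only [Nat.add_sub_cancel, ballot_succ_self, Nat.add_zero] at h1
          rw [show i + 1 + 0 = i + 1 from by ring, h1]
          congr 2 <;> omega
        rw [hsum, ih 1 M (by omega)]
        simp only [ballot_zero, Nat.zero_add, one_mul, Nat.sub_zero, Nat.mul_zero]
        rw [show M + 2 + 0 + 1 = (M + 2) + 1 from by ring,
          Nat.choose_succ_succ (M + 2) m]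
      | succ d ihd =>
        have hS : ∑ i ∈ Finset.range (m + 1 + 1),
            ballot (i + (d + 1)) i * (M + 2 - 2 * i).choose (m + 1 - i)
            = ∑ i ∈ Finset.range (m + 1 + 1),
              (ballot (i + d) i * (M + 2 - 2 * i).choose (m + 1 - i)
               + (if i = 0 then 0
                  else ballot (i + d + 1) (i - 1) * (M + 2 - 2 * i).choose (m + 1 - i))) := by
          apply Finset.sum_congr rfl
          intro i _
          rcases Nat.eq_zero_or_pos i with rfl | hi
          · simp [ballot_zero]
          · rw [if_neg (by omega)]
            have h1 := ballot_rec (i + (d + 1)) i (by omega) (by omega)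
            have e1 : i + (d + 1) - 1 = i + d := by omega
            have e2 : i + (d + 1) = i + d + 1 := by omega
            rw [h1, e1, e2, add_mul]
            ring
        rw [hS, Finset.sum_add_distrib, ihd]
        have hT : ∑ i ∈ Finset.range (m + 1 + 1),
            (if i = 0 then 0
             else ballot (i + d + 1) (i - 1) * (M + 2 - 2 * i).choose (m + 1 - i))
            = (M + (d + 2) + 1).choose m := by
          rw [Finset.sum_range_succ', if_pos rfl, Nat.add_zero, ← ih (d + 2) M (by omega)]
          apply Finset.sum_congr rfl
          intro i _
          rw [if_neg (Nat.succ_ne_zero i)]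
          congr 2 <;> omega
        rw [hT]
        have hp : (M + d + 3 + 1).choose (m + 1) =
            (M + d + 3).choose m + (M + d + 3).choose (m + 1) :=
          Nat.choose_succ_succ (M + d + 3) m
        have e1 : M + 2 + d + 1 = M + d + 3 := by ring
        have e2 : M + (d + 2) + 1 = M + d + 3 := by ring
        have e3 : M + 2 + (d + 1) + 1 = M + d + 3 + 1 := by ring
        rw [e1, e2, e3]
        omega

/-- For `n ≥ b` and `b - d - a ≥ 0`,
`∑_{i=0}^{n-b} C^{i+d}_i · C(2n-2i-d-a, n-b-i) = C(2n-a+1, n-b)`. -/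
theorem ballot_choose_sum (n b d a : ℕ) (hbn : b ≤ n) (hda : d + a ≤ b) :
    ∑ i ∈ Finset.range (n - b + 1),
        ballot (i + d) i * (2 * n - 2 * i - d - a).choose (n - b - i)
      = (2 * n - a + 1).choose (n - b) := by
  have hk := key (n - b) d (2 * n - d - a) (by omega)
  have hl : ∑ i ∈ Finset.range (n - b + 1),
      ballot (i + d) i * (2 * n - 2 * i - d - a).choose (n - b - i)
      = ∑ i ∈ Finset.range (n - b + 1),
        ballot (i + d) i * (2 * n - d - a - 2 * i).choose (n - b - i) := by
    apply Finset.sum_congr rfl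
    intro i _
    congr 2
    omega
  rw [hl, hk]
  congr 1
  omega
end

section
/- The generating function for bicolored Motzkin paths of length $k$ with boundary weights is $V_k(\alpha,\beta) = \sum_{i=0}^{k} \sum_{j=0}^{k-i} C^{k-1}_{k-i-j} \alpha^{-i}\beta^{-j}$, where $C^n_k$ are ballot numbers. -/
open scoped Classical

/-- Steps of a bicolored Motzkin path: up, down, and two colors of horizontal. -/
inductive MStep : Type
  | U : MStep
  | D : MStep
  | H1 : MStep
  | H2 : MStep
  deriving DecidableEq

instance instFintypeMStep : Fintype MStep :=
  ⟨{MStep.U, MStep.D, MStep.H1, MStep.H2}, fun x => by cases x <;> simp⟩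

/-- Height change of a step. -/
def MStep.ht : MStep → ℤ
  | .U => 1
  | .D => -1
  | .H1 => 0
  | .H2 => 0

/-- Total height change of a list of steps. -/
def htSum (l : List MStep) : ℤ := (l.map MStep.ht).sum

/-- A list of steps is a bicolored Motzkin path if it never goes below the
`x`-axis and ends at height `0`. -/
def IsMotzkin (l : List MStep) : Prop :=
  (∀ i : ℕ, 0 ≤ htSum (l.take i)) ∧ htSum l = 0

/-- The weight of a path, carried out from the starting height `h` and a flag
`sb` recording whether a `β`-weighted step (second-color horizontal step on the
axis) has already occurred.  Each second-color horizontal step on the axis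
contributes `1/β`; each up-step from the axis and each first-color horizontal
step on the axis contributes `1/α`, except when it is to the right of a
`β`-weighted step. -/
def pathWeight (α β : ℚ) : ℤ → Bool → List MStep → ℚ
  | _, _, [] => 1
  | h, sb, (MStep.U :: rest) =>
      (if h = 0 ∧ sb = false then α⁻¹ else 1) * pathWeight α β (h + 1) sb rest
  | h, sb, (MStep.D :: rest) => pathWeight α β (h - 1) sb rest
  | h, sb, (MStep.H1 :: rest) =>
      (if h = 0 ∧ sb = false then α⁻¹ else 1) * pathWeight α β h sb rest
  | h, sb, (MStep.H2 :: rest) =>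
      if h = 0 then β⁻¹ * pathWeight α β h true rest
      else pathWeight α β h sb rest

/-- The generating function `V_k(α,β)` of bicolored Motzkin paths of length `k`
with the boundary weights described above. -/
noncomputable def V (k : ℕ) (α β : ℚ) : ℚ :=
  ∑ f : Fin k → MStep,
    if IsMotzkin (List.ofFn f) then pathWeight α β 0 false (List.ofFn f) else 0

/-!
Let `W_k(h, s)` be the weighted sum over the paths of length `k` from height `h` down to the
axis, where the flag `s` records whether a `β`-weighted step has already occurred. Splitting off
the first step gives a recurrence in `k`; away from the axis it reads
`W_{k+1}(h+1) = W_k(h+2) + W_k(h) + 2 W_k(h+1)`, which is also satisfied by the ballot numbers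
`C^{k+h}_{k-h}`. One checks by Pascal's rule `C^{n+1}_{m+1} = C^{n+1}_m + C^n_{m+1}` that
`W_k(h, true) = ∑_j C^{k+h}_{k-h-j} β^{-j}` and `W_k(h, false) = ∑_j C^{k+h-1}_{k-h-j} g_j`,
where `g_j = ∑_{i ≤ j} α^{-i} β^{-(j-i)}`; the second index of `C` is allowed to be negative, so
that heights above `k` need no separate treatment. At `h = 0` this is the formula for `V_k`.
-/

open Finset HasAntidiagonal

lemma Nat.choose_succ_le_choose {M i : ℕ} (h : M ≤ 2 * i + 1) :
    M.choose (i + 1) ≤ M.choose i :=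
  Nat.le_of_mul_le_mul_right
    (by rw [Nat.choose_succ_right_eq]; exact Nat.mul_le_mul_left _ (by omega)) i.succ_pos

lemma Nat.choose_le_choose_succ {M i : ℕ} (h : 2 * i + 1 ≤ M) :
    M.choose i ≤ M.choose (i + 1) :=
  Nat.le_of_mul_le_mul_right
    (by rw [Nat.choose_succ_right_eq]; exact Nat.mul_le_mul_left _ (by omega)) i.succ_pos

@[simp] lemma ballot_zero_right (n : ℕ) : ballot n 0 = 1 := by
  simp [ballot, Nat.choose_succ_self]

lemma ballot_eq_zero_of_lt {n m : ℕ} (h : n < m) : ballot n m = 0 :=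
  Nat.sub_eq_zero_of_le (Nat.choose_le_choose_succ (by omega))

lemma ballot_succ_succ {n m : ℕ} (h : m ≤ n) :
    ballot (n + 1) (m + 1) = ballot (n + 1) m + ballot n (m + 1) := by
  have hle₁ := Nat.choose_succ_le_choose (M := n + m + 1) (i := n) (by omega)
  have hle₂ := Nat.choose_succ_le_choose (M := n + m + 1) (i := n + 1) (by omega)
  simp only [ballot, show n + 1 + (m + 1) = n + m + 1 + 1 by ring,
    show n + 1 + m = n + m + 1 by ring, show n + (m + 1) = n + m + 1 by ring,
    Nat.choose_succ_succ' (n + m + 1)]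
  omega

def ballotConv (w : ℕ → ℚ) (n : ℕ) : ℤ → ℚ
  | (m : ℕ) => ∑ p ∈ antidiagonal m, (ballot n p.1 : ℚ) * w p.2
  | Int.negSucc _ => 0

section ballotConv

variable (w : ℕ → ℚ)

lemma ballotConv_natCast (n m : ℕ) :
    ballotConv w n m = ∑ p ∈ antidiagonal m, (ballot n p.1 : ℚ) * w p.2 := rfl

lemma ballotConv_of_neg (n : ℕ) {m : ℤ} (hm : m < 0) : ballotConv w n m = 0 := by
  cases m with
  | ofNat m => exact absurd hm (by simp)
  | negSucc m => rfl

@[simp] lemma ballotConv_zero (n : ℕ) : ballotConv w n 0 = w 0 :=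
  (ballotConv_natCast w n 0).trans (by simp)

lemma ballotConv_natCast_succ_succ {n m : ℕ} (h : m ≤ n) :
    ballotConv w (n + 1) (m + 1 : ℕ)
      = ballotConv w (n + 1) m + ballotConv w n (m + 1 : ℕ) := by
  simp only [ballotConv_natCast, Finset.Nat.sum_antidiagonal_succ, ballot_zero_right,
    Nat.cast_one, one_mul]
  rw [add_left_comm, ← Finset.sum_add_distrib]
  congr 1
  refine sum_congr rfl fun p hp => ?_
  rw [ballot_succ_succ (by have := antidiagonal.fst_le hp; omega)]
  push_cast
  ring

lemma ballotConv_eq_add {n : ℕ} {m : ℤ} (h : m ≤ n) :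
    ballotConv w n m = ballotConv w n (m - 1) + ballotConv w (n - 1) m := by
  rcases lt_trichotomy m 0 with hm | rfl | hm
  · simp [ballotConv_of_neg w _ hm, ballotConv_of_neg w _ (show m - 1 < 0 by omega)]
  · simp [ballotConv_of_neg w n (show (-1 : ℤ) < 0 by omega)]
  · obtain ⟨m, rfl⟩ : ∃ m' : ℕ, m = (m' + 1 : ℕ) := ⟨m.toNat - 1, by omega⟩
    obtain ⟨n, rfl⟩ : ∃ n' : ℕ, n = n' + 1 := ⟨n - 1, by omega⟩
    rw [ballotConv_natCast_succ_succ w (by omega)]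
    simp

lemma ballotConv_eq_add_add {n : ℕ} {m : ℤ} (h : m < n) :
    ballotConv w n m = ballotConv w n (m - 2)
      + ballotConv w (n - 2) m + 2 * ballotConv w (n - 1) (m - 1) := by
  rw [ballotConv_eq_add w (le_of_lt h), ballotConv_eq_add w (n := n) (m := m - 1) (by omega),
    ballotConv_eq_add w (n := n - 1) (m := m) (by omega), show m - 1 - 1 = m - 2 by ring,
    show n - 1 - 1 = n - 2 by omega]
  ring

lemma ballotConv_add_one_of_le {n : ℕ} {m : ℤ} (h : n ≤ m) :
    ballotConv w n (m + 1) = ballotConv (fun t => w (t + 1)) n m := by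
  obtain ⟨m, rfl⟩ : ∃ m' : ℕ, m = m' := ⟨m.toNat, by omega⟩
  rw [← Nat.cast_succ, ballotConv_natCast, ballotConv_natCast, Finset.Nat.sum_antidiagonal_succ',
    ballot_eq_zero_of_lt (by omega)]
  simp

lemma ballotConv_add (w' : ℕ → ℚ) (n : ℕ) (m : ℤ) :
    ballotConv (w + w') n m = ballotConv w n m + ballotConv w' n m := by
  cases m with
  | ofNat m => simp [ballotConv, mul_add, sum_add_distrib]
  | negSucc m => simp [ballotConv]

lemma ballotConv_smul (c : ℚ) (n : ℕ) (m : ℤ) :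
    ballotConv (c • w) n m = c * ballotConv w n m := by
  cases m with
  | ofNat m => simp [ballotConv, mul_sum, mul_left_comm]
  | negSucc m => simp [ballotConv]

end ballotConv

def geomSum₂ (a b : ℚ) (s : ℕ) : ℚ := ∑ p ∈ antidiagonal s, a ^ p.1 * b ^ p.2

@[simp] lemma geomSum₂_zero (a b : ℚ) : geomSum₂ a b 0 = 1 := by simp [geomSum₂]

lemma geomSum₂_succ (a b : ℚ) (s : ℕ) :
    geomSum₂ a b (s + 1) = a * geomSum₂ a b s + b ^ (s + 1) := by
  simp only [geomSum₂, Finset.Nat.sum_antidiagonal_succ, mul_sum]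
  rw [add_comm]
  congr 1
  · exact sum_congr rfl fun p _ => by ring
  · simp

lemma ballotConv_pow_succ_diag (b : ℚ) (n : ℕ) :
    ballotConv (b ^ ·) (n + 1) (n + 1)
      = ballotConv (b ^ ·) (n + 1) (n - 1) + (1 + b) * ballotConv (b ^ ·) n n := by
  have hshift : (fun t => b ^ (t + 1)) = b • (b ^ ·) := funext fun t => by simp [pow_succ']
  rw [ballotConv_eq_add _ (by push_cast; rfl), add_sub_cancel_right,
    ballotConv_eq_add _ (m := n) (by push_cast; omega), add_tsub_cancel_right,
    ballotConv_add_one_of_le _ le_rfl, hshift, ballotConv_smul]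
  ring

lemma ballotConv_geomSum₂_succ_diag (a b : ℚ) (n : ℕ) :
    ballotConv (geomSum₂ a b) n (n + 1)
      = a * (ballotConv (geomSum₂ a b) n (n - 1) + ballotConv (geomSum₂ a b) (n - 1) n)
        + b * ballotConv (b ^ ·) n n := by
  have hshift : (fun t => geomSum₂ a b (t + 1)) = a • geomSum₂ a b + b • (b ^ ·) :=
    funext fun t => by simp [geomSum₂_succ, pow_succ']
  rw [ballotConv_add_one_of_le _ le_rfl, hshift, ballotConv_add, ballotConv_smul, ballotConv_smul,
    ← ballotConv_eq_add _ le_rfl]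

def IsMotzkinFrom (h : ℤ) (l : List MStep) : Prop :=
  (∀ i : ℕ, 0 ≤ h + htSum (l.take i)) ∧ h + htSum l = 0

@[simp] lemma htSum_nil : htSum [] = 0 := rfl

@[simp] lemma htSum_cons (s : MStep) (l : List MStep) :
    htSum (s :: l) = s.ht + htSum l := by
  simp [htSum]

lemma isMotzkin_iff_isMotzkinFrom_zero (l : List MStep) :
    IsMotzkin l ↔ IsMotzkinFrom 0 l := by
  simp [IsMotzkin, IsMotzkinFrom]

lemma isMotzkinFrom_nil (h : ℤ) : IsMotzkinFrom h [] ↔ h = 0 := by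
  simp +contextual [IsMotzkinFrom]

lemma not_isMotzkinFrom_of_neg {h : ℤ} (hh : h < 0) (l : List MStep) :
    ¬ IsMotzkinFrom h l := fun hl => by
  have := hl.1 0
  simp at this
  omega

lemma isMotzkinFrom_cons {h : ℤ} (hh : 0 ≤ h) (s : MStep) (l : List MStep) :
    IsMotzkinFrom h (s :: l) ↔ IsMotzkinFrom (h + s.ht) l := by
  constructor
  · rintro ⟨hpos, hend⟩
    refine ⟨fun i => ?_, by simp at hend; linarith⟩
    have := hpos (i + 1)
    simp at this
    linarith
  · rintro ⟨hpos, hend⟩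
    refine ⟨fun i => ?_, by simp; linarith⟩
    cases i with
    | zero => simpa using hh
    | succ i =>
      have := hpos i
      simp
      linarith

def stepWeight (α β : ℚ) (h : ℤ) (sb : Bool) : MStep → ℚ
  | .U | .H1 => if h = 0 ∧ sb = false then α⁻¹ else 1
  | .D => 1
  | .H2 => if h = 0 then β⁻¹ else 1

def nextFlag (h : ℤ) (sb : Bool) : MStep → Bool
  | .H2 => if h = 0 then true else sb
  | _ => sb

lemma pathWeight_cons (α β : ℚ) (h : ℤ) (sb : Bool) (s : MStep) (l : List MStep) :
    pathWeight α β h sb (s :: l)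
      = stepWeight α β h sb s * pathWeight α β (h + s.ht) (nextFlag h sb s) l := by
  cases s <;> by_cases h = 0 <;>
    simp [*, pathWeight, stepWeight, nextFlag, MStep.ht, sub_eq_add_neg]

lemma sum_univ_mStep (g : MStep → ℚ) :
    ∑ s : MStep, g s = g .U + g .D + g .H1 + g .H2 := by
  rw [show (univ : Finset MStep) = {.U, .D, .H1, .H2} from rfl, sum_insert (by decide),
    sum_insert (by decide), sum_insert (by decide), sum_singleton]
  ring

noncomputable def motzkinWeightSum (α β : ℚ) (k : ℕ) (h : ℤ) (sb : Bool) : ℚ :=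
  ∑ f : Fin k → MStep,
    if IsMotzkinFrom h (List.ofFn f) then pathWeight α β h sb (List.ofFn f) else 0

section motzkinWeightSum

variable (α β : ℚ)

lemma motzkinWeightSum_zero (h : ℤ) (sb : Bool) :
    motzkinWeightSum α β 0 h sb = if h = 0 then 1 else 0 := by
  simp [motzkinWeightSum, isMotzkinFrom_nil, pathWeight]

lemma motzkinWeightSum_of_neg (k : ℕ) {h : ℤ} (hh : h < 0) (sb : Bool) :
    motzkinWeightSum α β k h sb = 0 :=
  sum_eq_zero fun _ _ => if_neg (not_isMotzkinFrom_of_neg hh _)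

lemma motzkinWeightSum_succ (k : ℕ) {h : ℤ} (hh : 0 ≤ h) (sb : Bool) :
    motzkinWeightSum α β (k + 1) h sb = ∑ s : MStep,
      stepWeight α β h sb s * motzkinWeightSum α β k (h + s.ht) (nextFlag h sb s) := by
  rw [motzkinWeightSum, ← (Fin.consEquiv fun _ => MStep).sum_comp, Fintype.sum_prod_type]
  refine sum_congr rfl fun s _ => ?_
  rw [motzkinWeightSum, mul_sum]
  refine sum_congr rfl fun f _ => ?_
  rw [show (Fin.consEquiv fun _ => MStep) (s, f) = Fin.cons s f from rfl]
  simp only [List.ofFn_cons, isMotzkinFrom_cons hh, pathWeight_cons,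
    mul_ite, mul_zero]

lemma motzkinWeightSum_succ_zero_true (k : ℕ) :
    motzkinWeightSum α β (k + 1) 0 true
      = motzkinWeightSum α β k 1 true + (1 + β⁻¹) * motzkinWeightSum α β k 0 true := by
  simp [motzkinWeightSum_succ _ _ _ le_rfl, sum_univ_mStep, stepWeight, nextFlag, MStep.ht,
    motzkinWeightSum_of_neg]
  ring

lemma motzkinWeightSum_succ_zero_false (k : ℕ) :
    motzkinWeightSum α β (k + 1) 0 false
      = α⁻¹ * (motzkinWeightSum α β k 1 false + motzkinWeightSum α β k 0 false)
        + β⁻¹ * motzkinWeightSum α β k 0 true := by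
  simp [motzkinWeightSum_succ _ _ _ le_rfl, sum_univ_mStep, stepWeight, nextFlag, MStep.ht,
    motzkinWeightSum_of_neg]
  ring

lemma motzkinWeightSum_succ_natCast_succ (k h : ℕ) (sb : Bool) :
    motzkinWeightSum α β (k + 1) (h + 1 : ℕ) sb
      = motzkinWeightSum α β k (h + 2 : ℕ) sb + motzkinWeightSum α β k h sb
        + 2 * motzkinWeightSum α β k (h + 1 : ℕ) sb := by
  have hne : ((h + 1 : ℕ) : ℤ) ≠ 0 := by omega
  simp only [motzkinWeightSum_succ _ _ _ (Int.natCast_nonneg _), sum_univ_mStep, stepWeight,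
    nextFlag, MStep.ht, hne, false_and, if_false, one_mul]
  push_cast
  ring_nf

theorem motzkinWeightSum_eq_ballotConv (k h : ℕ) :
    motzkinWeightSum α β k h true = ballotConv (β⁻¹ ^ ·) (k + h) (k - h) ∧
    motzkinWeightSum α β k h false = ballotConv (geomSum₂ α⁻¹ β⁻¹) (k + h - 1) (k - h) := by
  induction k generalizing h with
  | zero =>
    cases h with
    | zero => simp [motzkinWeightSum_zero]
    | succ h =>
      simp only [motzkinWeightSum_zero, Nat.cast_zero, zero_sub]
      rw [if_neg (by omega),
        ballotConv_of_neg _ _ (by omega), ballotConv_of_neg _ _ (by omega)]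
      exact ⟨rfl, rfl⟩
  | succ k ih =>
    cases h with
    | zero =>
      obtain ⟨ih₁, ih₁'⟩ := ih 1
      obtain ⟨ih₀, ih₀'⟩ := ih 0
      simp only [Nat.cast_zero, Nat.cast_one, add_zero, sub_zero] at ih₀ ih₀' ih₁ ih₁' ⊢
      rw [motzkinWeightSum_succ_zero_true, motzkinWeightSum_succ_zero_false, ih₁, ih₁', ih₀, ih₀',
        Nat.cast_succ, ballotConv_pow_succ_diag, Nat.add_sub_cancel, ballotConv_geomSum₂_succ_diag]
      exact ⟨rfl, rfl⟩
    | succ h =>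
      rw [motzkinWeightSum_succ_natCast_succ, motzkinWeightSum_succ_natCast_succ,
        (ih _).1, (ih _).1, (ih _).1, (ih _).2, (ih _).2, (ih _).2]
      constructor
      · rw [ballotConv_eq_add_add _ (n := k + 1 + (h + 1)) (by omega)]
        congr 3 <;> omega
      · rw [ballotConv_eq_add_add _ (n := k + 1 + (h + 1) - 1) (by omega)]
        congr 3 <;> omega

end motzkinWeightSum

lemma sum_antidiagonal_sum_antidiagonal_snd {M : Type*} [AddCommMonoid M]
    (f : ℕ → ℕ → ℕ → M) (k : ℕ) :
    ∑ p ∈ antidiagonal k, ∑ q ∈ antidiagonal p.2, f p.1 q.1 q.2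
      = ∑ i ∈ range (k + 1), ∑ j ∈ range (k - i + 1), f (k - i - j) i j := by
  rw [sum_sigma', sum_sigma']
  refine sum_nbij' (fun x => ⟨x.2.1, x.2.2⟩) (fun y => ⟨(k - y.1 - y.2, y.1 + y.2), (y.1, y.2)⟩)
    ?_ ?_ ?_ ?_ ?_ <;>
  simp only [Sigma.forall, Prod.forall, mem_sigma, HasAntidiagonal.mem_antidiagonal, mem_range,
    Sigma.mk.injEq, heq_eq_eq, Prod.mk.injEq, and_true, and_imp] <;>
  intros <;>
  first | trivial | omega | (congr; omega)

theorem V_eq_general (k : ℕ) (α β : ℚ) :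
    V k α β
      = ∑ i ∈ Finset.range (k + 1), ∑ j ∈ Finset.range (k - i + 1),
          (ballot (k - 1) (k - i - j) : ℚ) * α⁻¹ ^ i * β⁻¹ ^ j := by
  have hV : V k α β = motzkinWeightSum α β k 0 false := by
    simp only [V, motzkinWeightSum, isMotzkin_iff_isMotzkinFrom_zero]
  have hformula := (motzkinWeightSum_eq_ballotConv α β k 0).2
  simp only [Nat.cast_zero, add_zero, sub_zero] at hformula
  rw [hV, hformula, ballotConv_natCast]
  simp only [geomSum₂, mul_sum, ← mul_assoc]
  exact sum_antidiagonal_sum_antidiagonal_snd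
    (fun l i j => (ballot (k - 1) l : ℚ) * α⁻¹ ^ i * β⁻¹ ^ j) k

/-- `V_k(α,β) = ∑_{i=0}^k ∑_{j=0}^{k-i} C^{k-1}_{k-i-j} α^{-i} β^{-j}`. -/
theorem V_eq (k : ℕ) (α β : ℚ) (hα : α ≠ 0) (hβ : β ≠ 0) :
    V k α β
      = ∑ i ∈ Finset.range (k + 1), ∑ j ∈ Finset.range (k - i + 1),
          (ballot (k - 1) (k - i - j) : ℚ) * α⁻¹ ^ i * β⁻¹ ^ j :=
  V_eq_general k α β
end

section
/- For $1 \le i \le n$ and $n \ge 2$, $\frac{\binom{2n-2}{n-i-1}}{\binom{2n}{n-i+1}} - \frac{\binom{2n-2}{n-i-2}}{\binom{2n}{n-i}} = \frac{n-i}{n(2n-1)}$, which gives the up-hook sum $H^{\uparrow}_i(n)$ of two-point correlations in the $B$-MultiTASEP. -/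
/-!
Both terms are instances of `C(N-2, j-2) / C(N, j) = j(j-1) / (N(N-1))`, the probability that two
fixed elements of an `N`-set lie in a random `j`-subset. With `N = 2n` and `k = n - i` the
difference is `((k+1)k - k(k-1)) / (2n(2n-1)) = k / (n(2n-1))`.
-/

/-- Binomial coefficient `C(m, k)` with an integer lower index, which is `0`
when `k < 0`. -/
def binZ (m : ℕ) (k : ℤ) : ℕ := if 0 ≤ k then m.choose k.toNat else 0

lemma binZ_natCast (m k : ℕ) : binZ m k = m.choose k := by
  simp [binZ]

lemma binZ_of_neg {m : ℕ} {k : ℤ} (hk : k < 0) : binZ m k = 0 := by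
  simp [binZ, hk.not_ge]

lemma choose_add_two_mul (a m : ℕ) :
    (a + 2).choose (m + 2) * ((m + 2) * (m + 1)) = (a + 2) * (a + 1) * a.choose m := by
  calc (a + 2).choose (m + 2) * ((m + 2) * (m + 1))
      = (a + 2) * (a + 1).choose (m + 1) * (m + 1) := by
        rw [Nat.add_one_mul_choose_eq (a + 1) (m + 1)]; ring
    _ = (a + 2) * ((a + 1) * a.choose m) := by
        rw [Nat.add_one_mul_choose_eq a m]; ring
    _ = (a + 2) * (a + 1) * a.choose m := by ring

lemma binZ_sub_two_div_choose {N j : ℕ} (hj : j ≤ N) :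
    (binZ (N - 2) ((j : ℤ) - 2) : ℚ) / N.choose j = j * (j - 1) / (N * (N - 1)) := by
  rcases Nat.lt_or_ge j 2 with hj2 | hj2
  · interval_cases j <;> simp [binZ_of_neg]
  obtain ⟨m, rfl⟩ := Nat.exists_eq_add_of_le' hj2
  obtain ⟨a, rfl⟩ : ∃ a, N = a + 2 := ⟨N - 2, by omega⟩
  have hchoose : ((a + 2).choose (m + 2) : ℚ) ≠ 0 := by
    exact_mod_cast (Nat.choose_pos hj).ne'
  have key : ((a + 2).choose (m + 2) : ℚ) * ((m + 2) * (m + 1)) = (a + 2) * (a + 1) * a.choose m := by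
    exact_mod_cast choose_add_two_mul a m
  rw [show ((m + 2 : ℕ) : ℤ) - 2 = (m : ℕ) by push_cast; ring, Nat.add_sub_cancel, binZ_natCast]
  push_cast
  rw [div_eq_div_iff hchoose (by ring_nf; positivity)]
  linear_combination -key

theorem B_up_hook_general (n i : ℕ) (hn : 2 ≤ n) (hin : i ≤ n) :
    (binZ (2 * n - 2) ((n : ℤ) - i - 1) : ℚ) / ((2 * n).choose (n - i + 1) : ℚ)
        - (binZ (2 * n - 2) ((n : ℤ) - i - 2) : ℚ) / ((2 * n).choose (n - i) : ℚ)
      = ((n : ℚ) - i) / (n * (2 * n - 1)) := by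
  have hk : ((n - i : ℕ) : ℤ) = n - i := by omega
  have hkq : ((n - i : ℕ) : ℚ) = n - i := by push_cast [hin]; ring
  rw [show (n : ℤ) - i - 1 = ((n - i + 1 : ℕ) : ℤ) - 2 by push_cast [hk]; ring,
    show (n : ℤ) - i - 2 = ((n - i : ℕ) : ℤ) - 2 by rw [hk],
    binZ_sub_two_div_choose (by omega), binZ_sub_two_div_choose (by omega)]
  have hn0 : (n : ℚ) ≠ 0 := by positivity
  have hn1 : (2 * n - 1 : ℚ) ≠ 0 := by
    have : (2 : ℚ) ≤ n := by exact_mod_cast hn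
    linarith
  push_cast [hkq]
  field_simp
  ring

/-- The up-hook sum of two-point correlations in the `B`-MultiTASEP:
`H↑_i(n) = ⟨1̄,1⟩_{n,i-1} - ⟨1̄,1⟩_{n,i}
        = C(2n-2, n-i-1)/C(2n, n-i+1) - C(2n-2, n-i-2)/C(2n, n-i)
        = (n-i)/(n(2n-1))` for `1 ≤ i ≤ n`, `n ≥ 2`. -/
theorem B_up_hook (n i : ℕ) (hn : 2 ≤ n) (hi : 1 ≤ i) (hin : i ≤ n) :
    (binZ (2 * n - 2) ((n : ℤ) - i - 1) : ℚ) / ((2 * n).choose (n - i + 1) : ℚ)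
        - (binZ (2 * n - 2) ((n : ℤ) - i - 2) : ℚ) / ((2 * n).choose (n - i) : ℚ)
      = ((n : ℚ) - i) / (n * (2 * n - 1)) :=
  B_up_hook_general n i hn hin
end
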